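/- arXiv:1409.0936 — 5 statements merged into one kernel-verified Lean document; each statement's English description precedes it below -/
import Mathlib

section
/- Let g be a left Leibniz algebra over a field F and let N be a subspace of g such that [a,b] = 0 for all a, b in N and [x,y] ∈ N for all x, y in g. For x in g define linear maps l_x, r_x : N → N by l_x(n) = [x,n] and r_x(n) = [n,x]. If there exists y ∈ g such that r_y : N → N is injective, then for every x ∈ g one has l_x = −r_x, i.e., [x,n] = −[n,x] for all x ∈ g and n ∈ N. -/
theorem leibniz_add_swap_apply_eq_zero {R M : Type*} [CommSemiring R] [AddCommGroup M]
    [Module R M] (B : M →ₗ[R] M →ₗ[R] M)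
    (leib : ∀ x y z : M, B x (B y z) = B (B x y) z + B y (B x z)) (x z y : M) :
    B (B x z + B z x) y = 0 := by
  have h := leib z x y
  rw [leib x z y, ← add_assoc, right_eq_add] at h
  rw [map_add, LinearMap.add_apply, add_comm, h]

theorem left_mult_eq_neg_right_mult_of_injective_right_mult_general
    {F : Type*} [Field F] {g : Type*} [AddCommGroup g] [Module F g]
    (B : g →ₗ[F] g →ₗ[F] g)
    (leib : ∀ x y z : g, B x (B y z) = B (B x y) z + B y (B x z))
    (N : Submodule F g)
    (hcl : ∀ x y : g, B x y ∈ N)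
    (hinj : ∃ y : g, ∀ n₁ ∈ N, ∀ n₂ ∈ N, B n₁ y = B n₂ y → n₁ = n₂) :
    ∀ x : g, ∀ n ∈ N, B x n = - B n x := by
  obtain ⟨y, hy⟩ := hinj
  intro x n _
  have hsymm : B x n + B n x = 0 :=
    hy _ (N.add_mem (hcl x n) (hcl n x)) 0 N.zero_mem
      (by rw [leibniz_add_swap_apply_eq_zero B leib, map_zero, LinearMap.zero_apply])
  exact eq_neg_of_add_eq_zero_left hsymm

/-- If `N` is an abelian subspace of a left Leibniz algebra `g` containing `[g,g]`,
and some right-multiplication operator `r_y` is injective on `N`, then `l_x = -r_x`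
on `N` for every `x`. -/
theorem left_mult_eq_neg_right_mult_of_injective_right_mult
    {F : Type*} [Field F] {g : Type*} [AddCommGroup g] [Module F g]
    (B : g →ₗ[F] g →ₗ[F] g)
    (leib : ∀ x y z : g, B x (B y z) = B (B x y) z + B y (B x z))
    (N : Submodule F g)
    (habelian : ∀ a ∈ N, ∀ b ∈ N, B a b = 0)
    (hcl : ∀ x y : g, B x y ∈ N)
    (hinj : ∃ y : g, ∀ n₁ ∈ N, ∀ n₂ ∈ N, B n₁ y = B n₂ y → n₁ = n₂) :
    ∀ x : g, ∀ n ∈ N, B x n = - B n x :=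
  left_mult_eq_neg_right_mult_of_injective_right_mult_general B leib N hcl hinj
end

section
/- Let g be a finite-dimensional left Leibniz algebra over a field F, let N be a subspace of g with [a,b] = 0 for all a, b ∈ N and [x,y] ∈ N for all x, y ∈ g, and suppose g = N ⊕ span{x} for some x ∈ g. If the linear map r_x : N → N, r_x(n) = [n,x], is bijective, then the bracket of g is antisymmetric: [u,v] = −[v,u] for all u, v ∈ g; in particular g is a Lie algebra. -/
/-!
Left Leibniz algebras have squares in the left annihilator, so `[[x,x],x] = 0`; as `[x,x] ∈ N`
and `r_x` is injective, `[x,x] = 0`. The Leibniz identity for `(m, x, x)` then reads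
`0 = [[m,x],x] + [x,[m,x]]`, and since `r_x` is onto every `n ∈ N` is some `[m,x]`, so `x`
anticommutes with `N`. Together with `N` abelian and `[x,x] = 0`, the symmetrised bracket
vanishes on `N ⊕ span{x}`.
-/

section LeftLeibniz

variable {R M : Type*} [CommRing R] [AddCommGroup M] [Module R M] (B : M →ₗ[R] M →ₗ[R] M)

theorem leibniz_apply_apply_self_eq_zero
    (leib : ∀ x y z : M, B x (B y z) = B (B x y) z + B y (B x z)) (x z : M) :
    B (B x x) z = 0 :=
  right_eq_add.mp (leib x x z)

theorem leibniz_apply_apply_right_eq_neg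
    (leib : ∀ x y z : M, B x (B y z) = B (B x y) z + B y (B x z)) {x : M} (hxx : B x x = 0)
    (m : M) : B x (B m x) = -B (B m x) x := by
  have h := leib m x x
  rw [hxx, map_zero] at h
  exact eq_neg_of_add_eq_zero_right h.symm

theorem apply_eq_neg_apply_of_sup_span_singleton_eq_top {N : Submodule R M} {x : M}
    (hsup : N ⊔ Submodule.span R {x} = ⊤) (habelian : ∀ a ∈ N, ∀ b ∈ N, B a b = 0)
    (hxx : B x x = 0) (hxN : ∀ n ∈ N, B x n = -B n x) (u v : M) :
    B u v = -B v u := by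
  have hdecomp : ∀ w : M, ∃ n ∈ N, ∃ c : R, w = n + c • x := fun w => by
    obtain ⟨n, hn, y, hy, rfl⟩ := Submodule.mem_sup.mp (hsup ▸ Submodule.mem_top (x := w))
    obtain ⟨c, rfl⟩ := Submodule.mem_span_singleton.mp hy
    exact ⟨n, hn, c, rfl⟩
  obtain ⟨n, hn, c, rfl⟩ := hdecomp u
  obtain ⟨m, hm, d, rfl⟩ := hdecomp v
  simp only [map_add, map_smul, LinearMap.add_apply, LinearMap.smul_apply, habelian n hn m hm,
    habelian m hm n hn, hxx, hxN n hn, hxN m hm, smul_zero, add_zero]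
  module

end LeftLeibniz

theorem one_dim_extension_with_bijective_right_action_is_Lie_general
    {F : Type*} [Field F] {g : Type*} [AddCommGroup g] [Module F g]
    (B : g →ₗ[F] g →ₗ[F] g)
    (leib : ∀ x y z : g, B x (B y z) = B (B x y) z + B y (B x z))
    (N : Submodule F g)
    (habelian : ∀ a ∈ N, ∀ b ∈ N, B a b = 0)
    (hcl : ∀ x y : g, B x y ∈ N)
    (x : g)
    (hcompl : IsCompl N (Submodule.span F {x}))
    (hbij : Function.Bijective (fun n : N => (⟨B (n : g) x, hcl (n : g) x⟩ : N))) :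
    ∀ u v : g, B u v = - B v u := by
  have hxx : B x x = 0 := by
    have h : (⟨B x x, hcl x x⟩ : N) = 0 :=
      hbij.injective <| Subtype.ext <| by
        simpa using leibniz_apply_apply_self_eq_zero B leib x x
    exact congrArg Subtype.val h
  have hxN : ∀ n ∈ N, B x n = -B n x := fun n hn => by
    obtain ⟨m, hm⟩ := hbij.surjective ⟨n, hn⟩
    rw [← show B m x = n from congrArg Subtype.val hm]
    exact leibniz_apply_apply_right_eq_neg B leib hxx m
  exact apply_eq_neg_apply_of_sup_span_singleton_eq_top B hcompl.sup_eq_top habelian hxx hxN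

/-- A one-dimensional extension of an abelian nilradical with bijective right action
is a Lie algebra: if `g = N ⊕ span{x}` with `N` abelian, `[g,g] ⊆ N`, and
`r_x : N → N` bijective, then the bracket is antisymmetric. -/
theorem one_dim_extension_with_bijective_right_action_is_Lie
    {F : Type*} [Field F] {g : Type*} [AddCommGroup g] [Module F g]
    [FiniteDimensional F g]
    (B : g →ₗ[F] g →ₗ[F] g)
    (leib : ∀ x y z : g, B x (B y z) = B (B x y) z + B y (B x z))
    (N : Submodule F g)
    (habelian : ∀ a ∈ N, ∀ b ∈ N, B a b = 0)
    (hcl : ∀ x y : g, B x y ∈ N)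
    (x : g)
    (hcompl : IsCompl N (Submodule.span F {x}))
    (hbij : Function.Bijective (fun n : N => (⟨B (n : g) x, hcl (n : g) x⟩ : N))) :
    ∀ u v : g, B u v = - B v u :=
  one_dim_extension_with_bijective_right_action_is_Lie_general B leib N habelian hcl x hcompl hbij
end

section
/- Let g be a 2-dimensional left Leibniz algebra over ℂ that is not a Lie algebra. Suppose g has a 1-dimensional subspace N with [N,N] = 0 and [g,g] ⊆ N, and suppose no element y ∈ g with y ∉ N is nilpotent (i.e., for y ∉ N, the operators z ↦ [y,z] and z ↦ [z,y] on g are not both nilpotent). Then there exist a basis {n, x} of g with n ∈ N and a scalar σ ∈ ℂ such that [n,n] = 0, [n,x] = 0, [x,n] = n, and [x,x] = σ n. -/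
/-!
Since `[u,[u,z]] = [[u,u],z] + [u,[u,z]]`, left multiplication by any square `[u,u]`, and hence
by any symmetrised bracket `[u,v] + [v,u]`, vanishes. The algebra is not Lie, so some such bracket
is nonzero; it lies in the line `N`, hence left multiplication by `N` vanishes. Then for `y ∉ N`
the right multiplication `R_y` maps `g` into `N ⊆ ker R_y`, so it is nilpotent, and `L_y` maps `g`
into `N`; non-nilpotency of `L_y` forces `[y,n] = β n` with `β ≠ 0`, and `x = β⁻¹ y` normalises
the basis.
-/

open Module Submodule

theorem Submodule.exists_smul_eq_of_finrank_eq_one {K V : Type*} [DivisionRing K] [AddCommGroup V]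
    [Module K V] {N : Submodule K V} (hN : finrank K N = 1) {n m : V} (hn : n ∈ N) (hn0 : n ≠ 0)
    (hm : m ∈ N) : ∃ c : K, c • n = m := by
  obtain ⟨c, hc⟩ := (finrank_eq_one_iff_of_nonzero' (⟨n, hn⟩ : N) (by simpa using hn0)).mp hN
    ⟨m, hm⟩
  exact ⟨c, congrArg Subtype.val hc⟩

def IsLeftLeibniz {R M : Type*} [CommRing R] [AddCommGroup M] [Module R M]
    (B : M →ₗ[R] M →ₗ[R] M) : Prop :=
  ∀ x y z : M, B x (B y z) = B (B x y) z + B y (B x z)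

namespace IsLeftLeibniz

variable {R M : Type*} [CommRing R] [AddCommGroup M] [Module R M] {B : M →ₗ[R] M →ₗ[R] M}

theorem square_bracket_eq_zero (h : IsLeftLeibniz B) (u z : M) : B (B u u) z = 0 := by
  have := h u u z
  rwa [eq_comm, add_eq_right] at this

theorem symm_bracket_eq_zero (h : IsLeftLeibniz B) (u v z : M) :
    B (B u v + B v u) z = 0 := by
  simpa [h.square_bracket_eq_zero] using h.square_bracket_eq_zero (u + v) z

theorem bracket_eq_zero_of_mem {K V : Type*} [Field K] [AddCommGroup V] [Module K V]
    {B : V →ₗ[K] V →ₗ[K] V} (h : IsLeftLeibniz B) (hnotLie : ¬ ∀ u v : V, B u v = - B v u)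
    {N : Submodule K V} (hN : finrank K N = 1) (hcl : ∀ u v : V, B u v ∈ N) :
    ∀ n ∈ N, ∀ z : V, B n z = 0 := by
  push Not at hnotLie
  obtain ⟨u, v, huv⟩ := hnotLie
  have hs : B u v + B v u ≠ 0 := fun hs => huv (eq_neg_of_add_eq_zero_left hs)
  intro n hn z
  obtain ⟨c, rfl⟩ := exists_smul_eq_of_finrank_eq_one hN (add_mem (hcl u v) (hcl v u)) hs hn
  rw [map_smul, LinearMap.smul_apply, h.symm_bracket_eq_zero, smul_zero]

end IsLeftLeibniz

theorem Module.End.isNilpotent_of_range_le_ker {R M : Type*} [CommRing R] [AddCommGroup M]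
    [Module R M] {f : Module.End R M} (h : LinearMap.range f ≤ LinearMap.ker f) :
    IsNilpotent f :=
  ⟨2, by rwa [sq, Module.End.mul_eq_comp, ← LinearMap.range_le_ker_iff]⟩

theorem linearIndependent_pair_of_mem_of_notMem {K V : Type*} [DivisionRing K] [AddCommGroup V]
    [Module K V] {N : Submodule K V} {n x : V} (hn : n ∈ N) (hn0 : n ≠ 0) (hx : x ∉ N) :
    LinearIndependent K ![n, x] :=
  (LinearIndependent.pair_iff' hn0).mpr fun a hax => hx (hax ▸ N.smul_mem a hn)

theorem LinearIndependent.span_pair_eq_top {K V : Type*} [DivisionRing K] [AddCommGroup V]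
    [Module K V] {n x : V} (h : LinearIndependent K ![n, x]) (hdim : finrank K V = 2) :
    span K {n, x} = ⊤ := by
  have := h.span_eq_top_of_card_eq_finrank (by simp [hdim])
  rwa [Matrix.range_cons_cons_empty] at this

theorem classification_L11_nonLie_general
    {g : Type*} [AddCommGroup g] [Module ℂ g]
    (B : g →ₗ[ℂ] g →ₗ[ℂ] g)
    (leib : ∀ x y z : g, B x (B y z) = B (B x y) z + B y (B x z))
    (hdim : Module.finrank ℂ g = 2)
    (hnotLie : ¬ ∀ u v : g, B u v = - B v u)
    (N : Submodule ℂ g)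
    (hNdim : Module.finrank ℂ N = 1)
    (hcl : ∀ u v : g, B u v ∈ N)
    (hnonnilp : ∀ y : g, y ∉ N →
      ¬ (IsNilpotent (B y : Module.End ℂ g) ∧ IsNilpotent (B.flip y : Module.End ℂ g))) :
    ∃ (n x : g) (σ : ℂ), n ∈ N ∧
      LinearIndependent ℂ ![n, x] ∧
      Submodule.span ℂ {n, x} = ⊤ ∧
      B n n = 0 ∧ B n x = 0 ∧ B x n = n ∧ B x x = σ • n := by
  have hLN := IsLeftLeibniz.bracket_eq_zero_of_mem leib hnotLie hNdim hcl
  have hNbot : N ≠ ⊥ := by rintro rfl; simp at hNdim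
  have hNtop : N ≠ ⊤ := by rintro rfl; simp [hdim] at hNdim
  obtain ⟨n, hnN, hn0⟩ := exists_mem_ne_zero_of_ne_bot hNbot
  have hspan : ∀ m ∈ N, ∃ c : ℂ, c • n = m := fun _ =>
    exists_smul_eq_of_finrank_eq_one hNdim hnN hn0
  obtain ⟨y, -, hy⟩ := SetLike.exists_of_lt (lt_top_iff_ne_top.mpr hNtop)
  obtain ⟨β, hβ⟩ := hspan _ (hcl y n)
  have hβ0 : β ≠ 0 := by
    rintro rfl
    refine hnonnilp y hy ⟨Module.End.isNilpotent_of_range_le_ker ?_,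
      Module.End.isNilpotent_of_range_le_ker ?_⟩ <;> rintro _ ⟨z, rfl⟩
    · obtain ⟨c, hc⟩ := hspan _ (hcl y z)
      simp [← hc, ← hβ]
    · exact hLN _ (hcl z y) y
  obtain ⟨σ, hσ⟩ := hspan _ (hcl (β⁻¹ • y) (β⁻¹ • y))
  have hli := linearIndependent_pair_of_mem_of_notMem hnN hn0
    ((N.smul_mem_iff (inv_ne_zero hβ0)).not.mpr hy)
  refine ⟨n, β⁻¹ • y, σ, hnN, hli, hli.span_pair_eq_top hdim, hLN n hnN n, hLN n hnN _, ?_,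
    hσ.symm⟩
  rw [map_smul, LinearMap.smul_apply, ← hβ, smul_smul, inv_mul_cancel₀ hβ0, one_smul]

/-- Classification of non-Lie Leibniz algebras `L(1,1)`: a 2-dimensional non-Lie
Leibniz algebra over `ℂ` with a 1-dimensional abelian `N ⊇ [g,g]` such that no element
outside `N` is nilpotent has a basis `{n, x}` with `n ∈ N`, `[n,n] = [n,x] = 0`,
`[x,n] = n`, `[x,x] = σ n`. -/
theorem classification_L11_nonLie
    {g : Type*} [AddCommGroup g] [Module ℂ g]
    (B : g →ₗ[ℂ] g →ₗ[ℂ] g)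
    (leib : ∀ x y z : g, B x (B y z) = B (B x y) z + B y (B x z))
    (hdim : Module.finrank ℂ g = 2)
    (hnotLie : ¬ ∀ u v : g, B u v = - B v u)
    (N : Submodule ℂ g)
    (hNdim : Module.finrank ℂ N = 1)
    (habelian : ∀ a ∈ N, ∀ b ∈ N, B a b = 0)
    (hcl : ∀ u v : g, B u v ∈ N)
    (hnonnilp : ∀ y : g, y ∉ N →
      ¬ (IsNilpotent (B y : Module.End ℂ g) ∧ IsNilpotent (B.flip y : Module.End ℂ g))) :
    ∃ (n x : g) (σ : ℂ), n ∈ N ∧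
      LinearIndependent ℂ ![n, x] ∧
      Submodule.span ℂ {n, x} = ⊤ ∧
      B n n = 0 ∧ B n x = 0 ∧ B x n = n ∧ B x x = σ • n :=
  classification_L11_nonLie_general B leib hdim hnotLie N hNdim hcl hnonnilp
end

section
/- Let R ∈ M_3(ℂ) be the matrix with R_{12} = 1 and all other entries 0, and let L ∈ M_3(ℂ) satisfy LR = RL and (R + L)R = 0. Then the first column of L is zero and the second row of L is zero, i.e., L = [[0,a,b],[0,0,0],[0,c,d]] for some a, b, c, d ∈ ℂ. Moreover, L is nilpotent if and only if d = L_{33} = 0. -/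
/-!
Write `R = E₀₁` for the matrix unit. Right multiplication by `E₀₁` moves column `0` to
column `1` and kills everything else, so `(R + L) R = 0` says that column `0` of `R + L`,
hence of `L`, vanishes. Comparing row `0` of `L E₀₁ = E₀₁ L` gives `L₁ⱼ = 0` for `j ≠ 1`
and `L₁₁ = L₀₀ = 0`. For a matrix of the resulting shape the trace is `L₂₂`, which must
vanish if `L` is nilpotent; conversely, if `L₂₂ = 0` then `L³ = 0`.
-/

namespace Matrix

section single

variable {n α : Type*} [DecidableEq n] [Fintype n] [Semiring α]

lemma apply_eq_zero_of_mul_single_eq_zero {M : Matrix n n α} {i j : n}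
    (h : M * single i j 1 = 0) (a : n) : M a i = 0 := by
  simpa using congrFun (congrFun h a) j

lemma apply_eq_zero_of_mul_single_eq_single_mul {M : Matrix n n α} {i j b : n}
    (h : M * single i j 1 = single i j 1 * M) (hb : b ≠ j) : M j b = 0 := by
  simpa [mul_single_apply_of_ne _ _ _ _ _ hb] using (congrFun (congrFun h i) b).symm

lemma apply_eq_apply_of_mul_single_eq_single_mul {M : Matrix n n α} {i j : n}
    (h : M * single i j 1 = single i j 1 * M) : M i i = M j j := by
  simpa using congrFun (congrFun h i) j

end single

section fin_three

variable {R : Type*}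

lemma pow_three_eq_zero_of_col_zero_row_one_zero [Semiring R] {L : Matrix (Fin 3) (Fin 3) R}
    (hcol : ∀ i, L i 0 = 0) (hrow : ∀ j, L 1 j = 0) (h22 : L 2 2 = 0) : L ^ 3 = 0 := by
  ext i j
  fin_cases i <;> fin_cases j <;>
    simp [pow_succ, mul_apply, Fin.sum_univ_three, hcol, hrow, h22]

lemma isNilpotent_iff_of_col_zero_row_one_zero [CommRing R] [IsReduced R]
    {L : Matrix (Fin 3) (Fin 3) R} (hcol : ∀ i, L i 0 = 0) (hrow : ∀ j, L 1 j = 0) :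
    IsNilpotent L ↔ L 2 2 = 0 := by
  have htrace : L.trace = L 2 2 := by simp [trace_fin_three, hcol 0, hrow 1]
  constructor
  · intro hL
    rw [← htrace]
    exact (isNilpotent_trace_of_isNilpotent hL).eq_zero
  · exact fun h22 => ⟨3, pow_three_eq_zero_of_col_zero_row_one_zero hcol hrow h22⟩

end fin_three

end Matrix

/-- Case 2 of the classification of `L(3,1)`: if `R` has `R₁₂ = 1` and all other
entries `0`, and `L` satisfies `LR = RL` and `(R + L)R = 0`, then the first column and
the second row of `L` vanish, and `L` is nilpotent iff `L₃₃ = 0`. -/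
theorem L31_case2_L_form
    (L : Matrix (Fin 3) (Fin 3) ℂ)
    (hcomm : L * !![0, 1, 0; 0, 0, 0; 0, 0, 0] = !![0, 1, 0; 0, 0, 0; 0, 0, 0] * L)
    (hrel : (!![0, 1, 0; 0, 0, 0; 0, 0, 0] + L) * !![0, 1, 0; 0, 0, 0; 0, 0, 0] = 0) :
    (∀ i, L i 0 = 0) ∧ (∀ j, L 1 j = 0) ∧ (IsNilpotent L ↔ L 2 2 = 0) := by
  have hR : !![0, 1, 0; 0, 0, 0; 0, 0, 0] = Matrix.single (0 : Fin 3) 1 (1 : ℂ) := by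
    ext i j
    fin_cases i <;> fin_cases j <;> rfl
  rw [hR] at hcomm hrel
  have hcol : ∀ i, L i 0 = 0 := fun i => by
    simpa using Matrix.apply_eq_zero_of_mul_single_eq_zero hrel i
  have hrow : ∀ j, L 1 j = 0 := by
    intro j
    by_cases hj : j = 1
    · rw [hj, ← Matrix.apply_eq_apply_of_mul_single_eq_single_mul hcomm, hcol 0]
    · exact Matrix.apply_eq_zero_of_mul_single_eq_single_mul hcomm hj
  exact ⟨hcol, hrow, Matrix.isNilpotent_iff_of_col_zero_row_one_zero hcol hrow⟩
end

section
/- Let R ∈ M_3(ℂ) be the nilpotent Jordan block with R_{12} = R_{23} = 1 and all other entries 0, and let L ∈ M_3(ℂ) satisfy LR = RL and (R + L)R = 0. Then L = [[0,−1,a],[0,0,−1],[0,0,0]] for some a ∈ ℂ; in particular L^3 = 0, so both R and L are nilpotent. -/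
/-!
The matrices commuting with the regular nilpotent `J` are the polynomials `a + b J + c J²` in it.
For such an `L`, `(J + L) J = a J + (1 + b) J²` because `J³ = 0`, so `(J + L) J = 0` forces
`a = 0` and `b = -1`. Then `L = J (c J - 1)` is `J` times a matrix commuting with `J`, whence
`L³ = J³ (c J - 1)³ = 0`.
-/

namespace Matrix

variable {R : Type*} [CommRing R]

def jordanBlock3 : Matrix (Fin 3) (Fin 3) R := !![0, 1, 0; 0, 0, 1; 0, 0, 0]

theorem jordanBlock3_sq :
    (jordanBlock3 : Matrix (Fin 3) (Fin 3) R) ^ 2 = !![0, 0, 1; 0, 0, 0; 0, 0, 0] := by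
  ext i j
  fin_cases i <;> fin_cases j <;> simp [jordanBlock3, sq, mul_apply, Fin.sum_univ_three]

theorem jordanBlock3_pow_three : (jordanBlock3 : Matrix (Fin 3) (Fin 3) R) ^ 3 = 0 := by
  ext i j
  fin_cases i <;> fin_cases j <;> simp [pow_succ, jordanBlock3, mul_apply, Fin.sum_univ_three]

theorem exists_eq_poly_of_commute_jordanBlock3 {L : Matrix (Fin 3) (Fin 3) R}
    (h : Commute L jordanBlock3) :
    ∃ a b c : R, L = a • 1 + b • jordanBlock3 + c • jordanBlock3 ^ 2 := by
  refine ⟨L 0 0, L 0 1, L 0 2, ?_⟩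
  have hentries := congrFun₂ h.eq
  simp only [jordanBlock3, mul_apply, of_apply, cons_val', cons_val_fin_one, Fin.sum_univ_three,
    Fin.isValue, cons_val_zero, cons_val_one, cons_val, Fin.forall_fin_succ, mul_zero, add_zero,
    cons_val_succ, mul_one, Fin.succ_zero_eq_one, zero_add, Fin.succ_one_eq_two,
    IsEmpty.forall_iff, and_true, zero_mul, one_mul, true_and] at hentries
  rw [jordanBlock3_sq]
  ext i j
  fin_cases i <;> fin_cases j <;> simp [jordanBlock3] <;> grind

theorem exists_eq_smul_sq_sub_of_commute_of_add_mul_eq_zero {L : Matrix (Fin 3) (Fin 3) R}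
    (hcomm : Commute L jordanBlock3) (hrel : (jordanBlock3 + L) * jordanBlock3 = 0) :
    ∃ c : R, L = c • jordanBlock3 ^ 2 - jordanBlock3 := by
  obtain ⟨a, b, c, rfl⟩ := exists_eq_poly_of_commute_jordanBlock3 hcomm
  have hexpand : (jordanBlock3 + (a • 1 + b • jordanBlock3 + c • jordanBlock3 ^ 2)) * jordanBlock3
      = a • jordanBlock3 + (1 + b) • (jordanBlock3 ^ 2 : Matrix (Fin 3) (Fin 3) R) := by
    rw [add_mul, add_mul, add_mul, smul_mul_assoc, smul_mul_assoc, smul_mul_assoc, one_mul,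
      ← pow_two, ← pow_succ, jordanBlock3_pow_three]
    module
  rw [hexpand, jordanBlock3_sq] at hrel
  have ha : a = 0 := by simpa [jordanBlock3] using congrFun₂ hrel 0 1
  have hb : 1 + b = 0 := by simpa [jordanBlock3] using congrFun₂ hrel 0 2
  refine ⟨c, ?_⟩
  rw [ha, eq_neg_of_add_eq_zero_right hb]
  module

theorem smul_jordanBlock3_sq_sub_pow_three (c : R) :
    (c • jordanBlock3 ^ 2 - jordanBlock3 : Matrix (Fin 3) (Fin 3) R) ^ 3 = 0 := by
  have hfactor : (c • jordanBlock3 ^ 2 - jordanBlock3 : Matrix (Fin 3) (Fin 3) R)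
      = jordanBlock3 * (c • jordanBlock3 - 1) := by
    rw [mul_sub, mul_one, mul_smul_comm, ← pow_two]
  have hcomm : Commute (jordanBlock3 : Matrix (Fin 3) (Fin 3) R) (c • jordanBlock3 - 1) :=
    ((Commute.refl _).smul_right c).sub_right (Commute.one_right _)
  rw [hfactor, hcomm.mul_pow, jordanBlock3_pow_three, zero_mul]

theorem smul_jordanBlock3_sq_sub_eq (c : R) :
    (c • jordanBlock3 ^ 2 - jordanBlock3 : Matrix (Fin 3) (Fin 3) R)
      = !![0, -1, c; 0, 0, -1; 0, 0, 0] := by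
  rw [jordanBlock3_sq]
  ext i j
  fin_cases i <;> fin_cases j <;> simp [jordanBlock3]

end Matrix

/-- Case 3 of the classification of `L(3,1)`: if `R` is the full nilpotent Jordan
block and `L` satisfies `LR = RL` and `(R + L)R = 0`, then
`L = [[0,-1,a],[0,0,-1],[0,0,0]]` for some `a ∈ ℂ`; in particular `L^3 = 0`, so both
`R` and `L` are nilpotent. -/
theorem L31_case3_both_nilpotent
    (L : Matrix (Fin 3) (Fin 3) ℂ)
    (hcomm : L * !![0, 1, 0; 0, 0, 1; 0, 0, 0] = !![0, 1, 0; 0, 0, 1; 0, 0, 0] * L)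
    (hrel : (!![0, 1, 0; 0, 0, 1; 0, 0, 0] + L) * !![0, 1, 0; 0, 0, 1; 0, 0, 0] = 0) :
    (∃ a : ℂ, L = !![0, -1, a; 0, 0, -1; 0, 0, 0]) ∧ L ^ 3 = 0 ∧
      IsNilpotent (!![0, 1, 0; 0, 0, 1; 0, 0, 0] : Matrix (Fin 3) (Fin 3) ℂ) ∧
      IsNilpotent L := by
  obtain ⟨c, rfl⟩ := Matrix.exists_eq_smul_sq_sub_of_commute_of_add_mul_eq_zero hcomm hrel
  have hcube := Matrix.smul_jordanBlock3_sq_sub_pow_three c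
  exact ⟨⟨c, Matrix.smul_jordanBlock3_sq_sub_eq c⟩, hcube,
    ⟨3, Matrix.jordanBlock3_pow_three⟩, ⟨3, hcube⟩⟩
end
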